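/- arXiv:0910.0592 — 2 statements merged into one kernel-verified Lean document; each statement's English description precedes it below -/
import Mathlib

section
/- Let ℱ be a family of pairwise non-comparable strata in a stratified space X, and let Z = ⋃_{S ∈ ℱ} U_S be the union of their incidence neighborhoods. Then Z is open in X and a stratum S of X contained in Z belongs to ℱ if and only if S is minimal among the strata contained in Z. -/
/-- Let `ℱ` be a family of pairwise non-comparable strata in a stratified space `X`
and `Z = ⋃ {U_S : S ∈ ℱ}` the union of their incidence neighborhoods
`U_S = ⋃ {S' ∈ 𝒮 : S ⊆ closure S'}`.  Then `Z` is open in `X`, and a stratum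
contained in `Z` belongs to `ℱ` iff it is minimal among the strata contained in `Z`. -/
theorem incidenceNbhds_of_noncomparable_family
    {X : Type*} [MetricSpace X] [SecondCountableTopology X] (𝒮 : Set (Set X))
    (hcover : ∀ x : X, ∃ S ∈ 𝒮, x ∈ S)
    (hdisj : ∀ S ∈ 𝒮, ∀ T ∈ 𝒮, (S ∩ T).Nonempty → S = T)
    (hne : ∀ S ∈ 𝒮, S.Nonempty)
    (hlc : ∀ S ∈ 𝒮, IsLocallyClosed S)
    (hlf : LocallyFinite (fun S : 𝒮 => (S : Set X)))
    (hinc : ∀ S ∈ 𝒮, ∀ S' ∈ 𝒮, (S ∩ closure S').Nonempty → S ⊆ closure S')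
    (ℱ : Set (Set X)) (hℱ : ℱ ⊆ 𝒮)
    (hnoncomp : ∀ S ∈ ℱ, ∀ T ∈ ℱ, S ≠ T → ¬ S ⊆ closure T ∧ ¬ T ⊆ closure S)
    (Z : Set X)
    (hZ : Z = ⋃ S ∈ ℱ, ⋃₀ {S' | S' ∈ 𝒮 ∧ S ⊆ closure S'}) :
    IsOpen Z ∧
      ∀ S ∈ 𝒮, S ⊆ Z →
        (S ∈ ℱ ↔ ∀ T ∈ 𝒮, T ⊆ Z → T ⊆ closure S → T = S) := by
  -- Each incidence neighborhood is open.
  have hUopen : ∀ S ∈ ℱ, IsOpen (⋃₀ {S' | S' ∈ 𝒮 ∧ S ⊆ closure S'}) := by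
    intro S hS
    rw [isOpen_iff_mem_nhds]
    intro x hx
    obtain ⟨S', ⟨hS'𝒮, hScl⟩, hxS'⟩ := hx
    obtain ⟨t, ht, hfin⟩ := hlf x
    set B : Set (Set X) := {T | T ∈ 𝒮 ∧ (T ∩ t).Nonempty ∧ x ∉ closure T} with hB
    have hBfin : B.Finite := by
      have hsub : B ⊆ (fun i : 𝒮 => (i : Set X)) '' {i : 𝒮 | ((i : Set X) ∩ t).Nonempty} := by
        rintro T ⟨hT𝒮, hTt, _⟩
        exact ⟨⟨T, hT𝒮⟩, hTt, rfl⟩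
      exact ((hfin.image _).subset hsub)
    have hclosed : IsClosed (⋃ T ∈ B, closure T) :=
      hBfin.isClosed_biUnion (fun T _ => isClosed_closure)
    have hxnot : x ∈ (⋃ T ∈ B, closure T)ᶜ := by
      simp only [Set.mem_compl_iff, Set.mem_iUnion]
      rintro ⟨T, ⟨_, _, hxT⟩, hxc⟩
      exact hxT hxc
    have hV : t ∩ (⋃ T ∈ B, closure T)ᶜ ∈ nhds x :=
      Filter.inter_mem ht (hclosed.isOpen_compl.mem_nhds hxnot)
    refine Filter.mem_of_superset hV ?_
    rintro y ⟨hyt, hync⟩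
    obtain ⟨T, hT𝒮, hyT⟩ := hcover y
    have hxcT : x ∈ closure T := by
      by_contra hxc
      exact hync (Set.mem_biUnion ⟨hT𝒮, ⟨y, hyT, hyt⟩, hxc⟩ (subset_closure hyT))
    have h1 : S' ⊆ closure T := hinc S' hS'𝒮 T hT𝒮 ⟨x, hxS', hxcT⟩
    have hScT : S ⊆ closure T := by
      refine hScl.trans ?_
      calc closure S' ⊆ closure (closure T) := closure_mono h1
        _ = closure T := closure_closure
    exact ⟨T, ⟨hT𝒮, hScT⟩, hyT⟩
  -- Mutually incident strata are equal.
  have hmut : ∀ S ∈ 𝒮, ∀ T ∈ 𝒮, S ⊆ closure T → T ⊆ closure S → S = T := by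
    intro S hS T hT hST hTS
    by_contra hne'
    have hdisjST : S ∩ T = ∅ := by
      by_contra hcon
      exact hne' (hdisj S hS T hT (Set.nonempty_iff_ne_empty.mpr hcon))
    have hTsub : T ⊆ closure S \ S := by
      intro y hy
      refine ⟨hTS hy, fun hyS => ?_⟩
      exact absurd (Set.mem_inter hyS hy) (by rw [hdisjST]; exact Set.notMem_empty y)
    have hclosed : IsClosed (closure S \ S) := by
      have h := (hlc S hS).isOpen_coborder
      have := h.isClosed_compl
      simpa [coborder, compl_compl] using this
    have hcT : closure T ⊆ closure S \ S := hclosed.closure_subset_iff.mpr hTsub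
    obtain ⟨x, hx⟩ := hne S hS
    exact (hcT (hST hx)).2 hx
  constructor
  · rw [hZ]
    exact isOpen_biUnion hUopen
  · intro S hS𝒮 hSZ
    constructor
    · -- forward: S ∈ ℱ implies minimality
      intro hSF T hT𝒮 hTZ hTcS
      obtain ⟨x, hxT⟩ := hne T hT𝒮
      have hxZ := hTZ hxT
      rw [hZ] at hxZ
      simp only [Set.mem_iUnion] at hxZ
      obtain ⟨S₀, hS₀F, S', ⟨hS'𝒮, hS₀cl⟩, hxS'⟩ := hxZ
      have hS'T : S' = T := hdisj S' hS'𝒮 T hT𝒮 ⟨x, hxS', hxT⟩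
      have hS₀cS : S₀ ⊆ closure S := by
        rw [hS'T] at hS₀cl
        refine hS₀cl.trans ?_
        calc closure T ⊆ closure (closure S) := closure_mono hTcS
          _ = closure S := closure_closure
      have hS₀S : S₀ = S := by
        by_contra hne'
        exact (hnoncomp S₀ hS₀F S hSF hne').1 hS₀cS
      rw [hS₀S, hS'T] at hS₀cl
      exact (hmut S hS𝒮 T hT𝒮 hS₀cl hTcS).symm
    · -- backward: minimality implies S ∈ ℱ
      intro hmin
      obtain ⟨x, hxS⟩ := hne S hS𝒮
      have hxZ := hSZ hxS
      rw [hZ] at hxZ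
      simp only [Set.mem_iUnion] at hxZ
      obtain ⟨S₀, hS₀F, S', ⟨hS'𝒮, hS₀cl⟩, hxS'⟩ := hxZ
      have hS'S : S' = S := hdisj S' hS'𝒮 S hS𝒮 ⟨x, hxS', hxS⟩
      rw [hS'S] at hS₀cl
      have hS₀Z : S₀ ⊆ Z := by
        rw [hZ]
        intro y hy
        simp only [Set.mem_iUnion]
        exact ⟨S₀, hS₀F, S₀, ⟨hℱ hS₀F, subset_closure⟩, hy⟩
      have := hmin S₀ (hℱ hS₀F) hS₀Z hS₀cl
      rwa [← this]
end

section
/- Let T → S be a fiber bundle with fiber c(L) and radium-preserving cocycles g_{αβ}. Define T̂ as the quotient of ⨆_α U_α × L × ℝ by (u,l,t) ∼ (u, g_{αβ}(u)(l), t). Then: (1) T̂ → S, [u,l,t] ↦ u, is a well-defined fiber bundle with fiber L × ℝ and the same cocycles; (2) the map L̂ : T̂ → T, [u,l,t] ↦ α(u,[l,|t|]), is well defined, continuous, surjective, and proper; (3) the function ρ̂ : T̂ → ℝ, [u,l,t] ↦ t, is well defined and satisfies |ρ̂(x)| = ρ(L̂(x)) for all x ∈ T̂, where ρ is the tubular radium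 of T. -/
open Set

/-- Radii for the open cone: the interval `[0,1)`. -/
abbrev ConeRadius : Type := {r : ℝ // 0 ≤ r ∧ r < 1}

/-- The cone relation on `L × [0,1)`: identify all points with radius `0`. -/
def coneSetoid (L : Type*) : Setoid (L × ConeRadius) where
  r p q := p = q ∨ (p.2.1 = 0 ∧ q.2.1 = 0)
  iseqv := by
    constructor
    · intro p; exact Or.inl rfl
    · intro p q h
      rcases h with h | h
      · exact Or.inl h.symm
      · exact Or.inr ⟨h.2, h.1⟩
    · intro p q r h1 h2
      rcases h1 with h1 | h1 <;> rcases h2 with h2 | h2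
      · exact Or.inl (h1.trans h2)
      · exact Or.inr ⟨by rw [h1]; exact h2.1, h2.2⟩
      · exact Or.inr ⟨h1.1, by rw [← h2]; exact h1.2⟩
      · exact Or.inr ⟨h1.1, h2.2⟩

/-- The open cone `c(L) = (L × [0,1)) / ∼` with the quotient topology. -/
abbrev Cone (L : Type*) : Type _ := Quotient (coneSetoid L)

/-- The class `[l, r]` of a point of `L × [0,1)` in the cone. -/
def conePt {L : Type*} (l : L) (r : ConeRadius) : Cone L :=
  Quotient.mk (coneSetoid L) (l, r)

/-- The vertex of the cone, as a subset (a single point). -/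
def coneVertexSet (L : Type*) : Set (Cone L) :=
  {x | ∃ l : L, x = conePt l ⟨0, le_refl 0, one_pos⟩}

/-- Unbent radii: the interval `(-1, 1)`. -/
abbrev UnbRadius : Type := {t : ℝ // |t| < 1}

/-- The canonical unbending `ĉ(u, l, t) = (u, [l, |t|])` of the basic model
`M × c(L)`. -/
def hatc (M L : Type*) : M × L × UnbRadius → M × Cone L :=
  fun p => (p.1, conePt p.2.1 ⟨|p.2.2.1|, abs_nonneg _, p.2.2.2⟩)


open Set Topology

universe u v w

/-- Total space of the disjoint union `⨆ i, U i × L × (-1,1)` used to build the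
unbending of a tube. -/
abbrev UnbE {S : Type u} (L : Type v) {ι : Type w} (U : ι → Set S) :
    Type (max u v w) :=
  Σ i : ι, (↥(U i) × L × UnbRadius)

/-- The gluing relation `(u,l,t) ∼ (u, g_{ij}(u)(l), t)` on the disjoint union. -/
def unbRel {S : Type u} {L : Type v} {ι : Type w} [TopologicalSpace L]
    (U : ι → Set S) (g : ι → ι → S → L ≃ₜ L) : UnbE L U → UnbE L U → Prop :=
  fun p q =>
    (p.2.1 : S) = (q.2.1 : S) ∧ p.2.2.2 = q.2.2.2 ∧
      q.2.2.1 = g p.1 q.1 (p.2.1 : S) p.2.2.1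

/-- The unbending `T̂` of a tube: the quotient of `⨆ i, U i × L × (-1,1)` by the
radium-preserving cocycles. -/
abbrev UnbT {S : Type u} {L : Type v} {ι : Type w} [TopologicalSpace S]
    [TopologicalSpace L] (U : ι → Set S) (g : ι → ι → S → L ≃ₜ L) :
    Type (max u v w) :=
  Quot (unbRel U g)

/-! The cocycle identities make the gluing relation an equivalence relation, so each
`U i × L × (-1,1)` embeds openly in `T̂` with image `τ̂⁻¹(U i)`. Read in the charts `α_i`, `L̂` is
the model unbending `ĉ : (u,l,t) ↦ (u,[l,|t|])` of `U i × c(L)`, which is proper: `t ↦ |t|` is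
proper, and so is `L × [0,1) → c(L)` since it only collapses the compact base `L × {0}`.
Properness being local on the target, `L̂` is proper. -/

open TopologicalSpace

section ProperLocalAtTarget

variable {X Y : Type*} [TopologicalSpace X] [TopologicalSpace Y] {f : X → Y}

theorem TopologicalSpace.IsOpenCover.isProperMap_iff_restrictPreimage {ι : Type*}
    {V : ι → Opens Y} (hV : IsOpenCover V) (hf : Continuous f) :
    IsProperMap f ↔ ∀ i, IsProperMap ((V i).1.restrictPreimage f) := by
  refine ⟨fun H i => H.restrictPreimage _, fun H => ?_⟩
  rw [isProperMap_iff_isClosedMap_and_compact_fibers]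
  refine ⟨hf, hV.isClosedMap_iff_restrictPreimage.2 fun i => (H i).isClosedMap, fun y => ?_⟩
  obtain ⟨i, hi⟩ := hV.exists_mem y
  have hfiber := ((H i).isCompact_preimage (isCompact_singleton (x := ⟨y, hi⟩))).image
    continuous_subtype_val
  rwa [image_val_preimage_restrictPreimage, image_singleton] at hfiber

theorem isProperMap_restrictPreimage_range {X' Y' : Type*} [TopologicalSpace X']
    [TopologicalSpace Y'] {e₁ : X' → X} {e₂ : Y' → Y} {f' : X' → Y'}
    (he₁ : IsEmbedding e₁) (he₂ : IsEmbedding e₂) (hrange : range e₁ = f ⁻¹' range e₂)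
    (hcomm : f ∘ e₁ = e₂ ∘ f') (hf' : IsProperMap f') :
    IsProperMap ((range e₂).restrictPreimage f) := by
  let φ : X' ≃ₜ f ⁻¹' range e₂ :=
    he₁.toHomeomorph.trans (Homeomorph.setCongr hrange)
  have hconj : (range e₂).restrictPreimage f = he₂.toHomeomorph ∘ f' ∘ φ.symm := by
    refine funext fun x => ?_
    obtain ⟨x', rfl⟩ := φ.surjective x
    ext
    simp only [Function.comp_apply, Homeomorph.symm_apply_apply]
    exact congrFun hcomm x'
  rw [hconj]
  exact he₂.toHomeomorph.isProperMap.comp (hf'.comp φ.symm.isProperMap)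

end ProperLocalAtTarget

section Cone

def unbAbs (t : UnbRadius) : ConeRadius := ⟨|t.1|, abs_nonneg _, t.2⟩

@[fun_prop]
theorem continuous_unbAbs : Continuous unbAbs := by
  unfold unbAbs; fun_prop

theorem image_val_preimage_unbAbs (K : Set ConeRadius) :
    Subtype.val '' (unbAbs ⁻¹' K) = dist 0 ⁻¹' (Subtype.val '' K) := by
  ext t
  simp only [mem_image, mem_preimage, Real.dist_eq, zero_sub, abs_neg, Subtype.exists]
  constructor
  · rintro ⟨t, ht, htK, rfl⟩
    exact ⟨|t|, ⟨abs_nonneg _, ht⟩, htK, rfl⟩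
  · rintro ⟨r, hr, hrK, rfl⟩
    exact ⟨t, hr.2, hrK, rfl⟩

theorem isProperMap_unbAbs : IsProperMap unbAbs := by
  refine isProperMap_iff_isCompact_preimage.2 ⟨continuous_unbAbs, fun K hK => ?_⟩
  rw [IsEmbedding.subtypeVal.isCompact_iff, image_val_preimage_unbAbs]
  exact (isProperMap_dist 0).isCompact_preimage (hK.image continuous_subtype_val)

def coneBase (L : Type*) : Set (L × ConeRadius) := {p | p.2.1 = 0}

theorem coneMk_preimage_image {L : Type*} (C : Set (L × ConeRadius)) :
    Quotient.mk (coneSetoid L) ⁻¹' (Quotient.mk (coneSetoid L) '' C) =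
      C ∪ {p ∈ coneBase L | (C ∩ coneBase L).Nonempty} := by
  ext p
  simp only [mem_preimage, mem_image, mem_union, coneBase, mem_ofPred_eq]
  constructor
  · rintro ⟨q, hq, hqp⟩
    rcases Quotient.exact hqp with rfl | ⟨hq0, hp0⟩
    exacts [Or.inl hq, Or.inr ⟨hp0, q, hq, hq0⟩]
  · rintro (hp | ⟨hp0, q, hq, hq0⟩)
    exacts [⟨p, hp, rfl⟩, ⟨q, hq, Quotient.sound (Or.inr ⟨hq0, hp0⟩)⟩]

theorem surjective_hatc (M L : Type*) : Function.Surjective (hatc M L) := by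
  rintro ⟨m, x⟩
  obtain ⟨⟨l, r⟩, rfl⟩ := Quotient.exists_rep x
  refine ⟨(m, l, ⟨r.1, by rw [abs_of_nonneg r.2.1]; exact r.2.2⟩), ?_⟩
  simp only [hatc, abs_of_nonneg r.2.1]
  rfl

variable {L : Type*} [TopologicalSpace L]

theorem isClosed_coneBase : IsClosed (coneBase L) :=
  isClosed_eq (by fun_prop) continuous_const

theorem isCompact_coneBase [CompactSpace L] : IsCompact (coneBase L) :=
  (isCompact_univ.prod (isCompact_singleton (x := (⟨0, le_rfl, one_pos⟩ : ConeRadius))))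
    |>.of_isClosed_subset isClosed_coneBase fun _ hp => ⟨trivial, Subtype.ext hp⟩

theorem isProperMap_coneMk [CompactSpace L] : IsProperMap (Quotient.mk (coneSetoid L)) := by
  refine isProperMap_iff_isClosedMap_and_compact_fibers.2
    ⟨continuous_quot_mk, fun C hC => ?_, fun y => ?_⟩
  · have hq : IsQuotientMap (Quotient.mk (coneSetoid L)) := isQuotientMap_quotient_mk'
    rw [← hq.isClosed_preimage, coneMk_preimage_image]
    exact hC.union (isClosed_coneBase.inter isClosed_const)
  · obtain ⟨p, rfl⟩ := Quotient.exists_rep y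
    rw [← image_singleton, coneMk_preimage_image]
    exact isCompact_singleton.union (isCompact_coneBase.inter_right isClosed_const)

theorem continuous_hatc (M : Type*) [TopologicalSpace M] : Continuous (hatc M L) :=
  continuous_fst.prodMk (continuous_quot_mk.comp (by fun_prop))

theorem isProperMap_hatc [CompactSpace L] (M : Type*) [TopologicalSpace M] :
    IsProperMap (hatc M L) :=
  isProperMap_id.prodMap (isProperMap_coneMk.comp (isProperMap_id.prodMap isProperMap_unbAbs))

end Cone

section Gluing

variable {S L ι : Type*} [TopologicalSpace L] {U : ι → Set S}
  {g : ι → ι → S → L ≃ₜ L}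

variable (U g) in
def IsGluingCocycle : Prop :=
  (∀ i, ∀ u ∈ U i, g i i u = Homeomorph.refl L) ∧
    ∀ i j k, ∀ u ∈ U i ∩ U j ∩ U k, ∀ l : L, g j k u (g i j u l) = g i k u l

theorem IsGluingCocycle.unbRel_equivalence (hg : IsGluingCocycle U g) :
    Equivalence (unbRel U g) where
  refl := by
    rintro ⟨i, u, l, t⟩
    exact ⟨rfl, rfl, by rw [hg.1 i u u.2]; rfl⟩
  symm := by
    rintro ⟨i, u, l, t⟩ ⟨j, v, m, s⟩ ⟨huv, hts, hm⟩
    have hu : (u : S) ∈ U i ∩ U j ∩ U i := ⟨⟨u.2, huv ▸ v.2⟩, u.2⟩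
    refine ⟨huv.symm, hts.symm, ?_⟩
    dsimp only at huv hm ⊢
    rw [hm, ← huv, hg.2 i j i u hu, hg.1 i u u.2]
    rfl
  trans := by
    rintro ⟨i, u, l, t⟩ ⟨j, v, m, s⟩ ⟨k, w, n, r⟩ ⟨huv, hts, hm⟩ ⟨hvw, hsr, hn⟩
    have hu : (u : S) ∈ U i ∩ U j ∩ U k := ⟨⟨u.2, huv ▸ v.2⟩, huv ▸ hvw ▸ w.2⟩
    refine ⟨huv.trans hvw, hts.trans hsr, ?_⟩
    dsimp only at huv hm hn ⊢
    rw [hn, hm, ← huv, hg.2 i j k u hu]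

theorem IsGluingCocycle.unbT_mk_eq_iff (hg : IsGluingCocycle U g) {p q : UnbE L U} :
    Quot.mk (unbRel U g) p = Quot.mk (unbRel U g) q ↔ unbRel U g p q :=
  Quot.eq.trans hg.unbRel_equivalence.eqvGen_iff

variable [TopologicalSpace S] (U g)

def unbChart (i : ι) : ↥(U i) × L × UnbRadius → UnbT U g :=
  fun p => Quot.mk (unbRel U g) ⟨i, p⟩

def unbProj : UnbT U g → S :=
  Quot.lift (fun p => (p.2.1 : S)) fun _ _ h => h.1

def unbRadium : UnbT U g → ℝ :=
  Quot.lift (fun p => p.2.2.2.1) fun _ _ h => congrArg Subtype.val h.2.1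

variable {U g}

theorem continuous_unbProj : Continuous (unbProj U g) :=
  continuous_quot_lift _ (continuous_sigma fun _ => continuous_subtype_val.comp continuous_fst)

theorem range_unbChart (i : ι) : range (unbChart U g i) = unbProj U g ⁻¹' U i := by
  ext x
  refine ⟨?_, fun hx => ?_⟩
  · rintro ⟨p, rfl⟩
    exact p.1.2
  · obtain ⟨⟨j, u, l, t⟩, rfl⟩ := Quot.exists_rep x
    exact ⟨(⟨u, hx⟩, g j i u l, t), (Quot.sound ⟨rfl, rfl, rfl⟩).symm⟩

theorem injective_unbChart (hg : IsGluingCocycle U g)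
    (i : ι) : Function.Injective (unbChart U g i) := by
  rintro ⟨u, l, t⟩ ⟨v, m, s⟩ h
  obtain ⟨huv, hts, hm⟩ := hg.unbT_mk_eq_iff.1 h
  dsimp only at huv hts hm
  rw [hg.1 i u u.2] at hm
  exact Prod.ext (Subtype.ext huv) (Prod.ext hm.symm hts)

theorem mk_mem_unbChart_image_iff (hg : IsGluingCocycle U g)
    {i j : ι} {V : Set (↥(U i) × L × UnbRadius)} (q : ↥(U j) × L × UnbRadius) :
    Quot.mk (unbRel U g) ⟨j, q⟩ ∈ unbChart U g i '' V ↔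
      ((q.1 : S), g j i q.1 q.2.1, q.2.2) ∈
        (fun p : ↥(U i) × L × UnbRadius => ((p.1 : S), p.2)) '' V := by
  refine exists_congr fun p => and_congr_right fun _ => ?_
  rw [unbChart, eq_comm, hg.unbT_mk_eq_iff]
  simp only [unbRel, Prod.ext_iff]
  exact ⟨fun ⟨h₁, h₂, h₃⟩ => ⟨h₁.symm, h₃, h₂.symm⟩,
    fun ⟨h₁, h₃, h₂⟩ => ⟨h₁.symm, h₂.symm, h₃⟩⟩

theorem isOpenMap_unbChart (hg : IsGluingCocycle U g)
    {i : ι} (hUi : IsOpen (U i)) (hgcont : ∀ j, Continuous fun p : S × L => g j i p.1 p.2) :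
    IsOpenMap (unbChart U g i) := by
  intro V hV
  rw [← isQuotientMap_quot_mk.isOpen_preimage, isOpen_sigma_iff]
  intro j
  have hV' : IsOpen ((fun p : ↥(U i) × L × UnbRadius => ((p.1 : S), p.2)) '' V) :=
    (hUi.isOpenEmbedding_subtypeVal.isOpenMap.prodMap IsOpenMap.id) V hV
  have htransition : Continuous fun q : ↥(U j) × L × UnbRadius =>
      ((q.1 : S), g j i q.1 q.2.1, q.2.2) := by
    have := hgcont j
    fun_prop
  convert htransition.isOpen_preimage _ hV' using 1
  ext q
  exact mk_mem_unbChart_image_iff hg q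

theorem isOpenEmbedding_unbChart (hg : IsGluingCocycle U g)
    {i : ι} (hUi : IsOpen (U i)) (hgcont : ∀ j, Continuous fun p : S × L => g j i p.1 p.2) :
    IsOpenEmbedding (unbChart U g i) :=
  .of_continuous_injective_isOpenMap (continuous_quot_mk.comp continuous_sigmaMk)
    (injective_unbChart hg i) (isOpenMap_unbChart hg hUi hgcont)

end Gluing

section Unbending

variable {S T L ι : Type*} [TopologicalSpace S] [TopologicalSpace L]
  {U : ι → Set S} {g : ι → ι → S → L ≃ₜ L}

variable (U) in
def tubeChart (a : ι → S → Cone L → T) (i : ι) : ↥(U i) × Cone L → T :=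
  fun p => a i p.1.1 p.2

variable (a : ι → S → Cone L → T)
  (hcocycle : ∀ i j, ∀ u ∈ U i ∩ U j, ∀ (l : L) (r : ConeRadius),
    a i u (conePt l r) = a j u (conePt (g i j u l) r))

def unbendingMap : UnbT U g → T :=
  Quot.lift (fun p => tubeChart U a p.1 (hatc _ L p.2)) <| by
    rintro ⟨i, u, l, t⟩ ⟨j, v, m, s⟩ ⟨huv, hts, hm⟩
    dsimp only at huv hts hm
    simp only [tubeChart, hatc, ← huv, hm, ← hts]
    exact hcocycle i j u ⟨u.2, huv ▸ v.2⟩ l (unbAbs t)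

theorem unbendingMap_comp_unbChart (i : ι) :
    unbendingMap a hcocycle ∘ unbChart U g i = tubeChart U a i ∘ hatc (U i) L :=
  rfl

theorem surjective_unbendingMap (hcover : ∀ y, ∃ i, y ∈ range (tubeChart U a i)) :
    Function.Surjective (unbendingMap a hcocycle) := by
  intro y
  obtain ⟨i, hi⟩ := hcover y
  rw [← image_univ, ← (surjective_hatc _ _).range_eq, ← range_comp,
    ← unbendingMap_comp_unbChart a hcocycle] at hi
  obtain ⟨p, hp⟩ := hi
  exact ⟨unbChart U g i p, hp⟩

theorem preimage_unbendingMap_eq_range_unbChart {τ : T → S}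
    (hτa : ∀ i, ∀ u ∈ U i, ∀ x : Cone L, τ (a i u x) = u) (i : ι) :
    unbendingMap a hcocycle ⁻¹' (τ ⁻¹' U i) = range (unbChart U g i) := by
  rw [range_unbChart]
  ext x
  obtain ⟨⟨j, u, l, t⟩, rfl⟩ := Quot.exists_rep x
  exact iff_of_eq (congrArg (· ∈ U i) (hτa j u u.2 _))

theorem abs_unbRadium {ρ : T → ℝ}
    (hρ : ∀ i, ∀ u ∈ U i, ∀ (l : L) (r : ConeRadius), ρ (a i u (conePt l r)) = r.1)
    (x : UnbT U g) : |unbRadium U g x| = ρ (unbendingMap a hcocycle x) := by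
  obtain ⟨⟨i, u, l, t⟩, rfl⟩ := Quot.exists_rep x
  exact (hρ i u u.2 l (unbAbs t)).symm

variable [TopologicalSpace T]

theorem continuous_unbendingMap (hcont : ∀ i, Continuous (tubeChart U a i)) :
    Continuous (unbendingMap a hcocycle) :=
  continuous_quot_lift _ (continuous_sigma fun i => (hcont i).comp (continuous_hatc _))

theorem isProperMap_unbendingMap [CompactSpace L]
    (hcharts : ∀ i, IsOpenEmbedding (tubeChart U a i))
    (hcover : ∀ y, ∃ i, y ∈ range (tubeChart U a i))
    (hunbCharts : ∀ i, IsEmbedding (unbChart U g i))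
    (hpreimage : ∀ i,
      unbendingMap a hcocycle ⁻¹' range (tubeChart U a i) = range (unbChart U g i)) :
    IsProperMap (unbendingMap a hcocycle) := by
  let V (i : ι) : Opens T := ⟨_, (hcharts i).isOpen_range⟩
  have hV : IsOpenCover V :=
    .of_sets (fun i => (hcharts i).isOpen_range) (iUnion_eq_univ_iff.2 hcover)
  refine (hV.isProperMap_iff_restrictPreimage
    (continuous_unbendingMap a hcocycle fun i => (hcharts i).continuous)).2 fun i => ?_
  exact isProperMap_restrictPreimage_range (hunbCharts i) (hcharts i).isEmbedding
    (hpreimage i).symm (unbendingMap_comp_unbChart a hcocycle i) (isProperMap_hatc _)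

end Unbending

theorem unbending_of_tube_general
    {S T L : Type*} [TopologicalSpace S] [TopologicalSpace T]
    [TopologicalSpace L] [CompactSpace L]
    (τ : T → S)
    {ι : Type*} (U : ι → Set S)
    (hUopen : ∀ i, IsOpen (U i))
    (hUcover : ∀ u : S, ∃ i, u ∈ U i)
    (a : ι → S → Cone L → T)
    (hτa : ∀ i, ∀ u ∈ U i, ∀ x : Cone L, τ (a i u x) = u)
    (hcharts : ∀ i, IsOpenEmbedding (fun p : ↥(U i) × Cone L => a i p.1.1 p.2))
    (hrange : ∀ i, Set.range (fun p : ↥(U i) × Cone L => a i p.1.1 p.2) = τ ⁻¹' (U i))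
    (g : ι → ι → S → L ≃ₜ L)
    (hgcont : ∀ i j, Continuous fun p : S × L => g i j p.1 p.2)
    (hgid : ∀ i, ∀ u ∈ U i, g i i u = Homeomorph.refl L)
    (hgcomp : ∀ i j k, ∀ u ∈ U i ∩ U j ∩ U k, ∀ l : L,
      g j k u (g i j u l) = g i k u l)
    (hcocycle : ∀ i j, ∀ u ∈ U i ∩ U j, ∀ (l : L) (r : ConeRadius),
      a i u (conePt l r) = a j u (conePt (g i j u l) r)) :
    ∃ (hatτ : UnbT U g → S) (hatL : UnbT U g → T) (hatρ : UnbT U g → ℝ),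
      -- (1) the projection is well defined, continuous, and locally trivial with
      -- fiber `L × ℝ` and the same cocycles:
      (∀ (i : ι) (u : ↥(U i)) (l : L) (t : UnbRadius),
          hatτ (Quot.mk (unbRel U g) ⟨i, (u, l, t)⟩) = (u : S)) ∧
      Continuous hatτ ∧
      (∀ i : ι, IsOpenEmbedding
        (fun p : ↥(U i) × L × UnbRadius => Quot.mk (unbRel U g) ⟨i, p⟩)) ∧
      (∀ i : ι, Set.range
        (fun p : ↥(U i) × L × UnbRadius => Quot.mk (unbRel U g) ⟨i, p⟩) =
          hatτ ⁻¹' (U i)) ∧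
      (∀ (i j : ι) (u : ↥(U i)) (u' : ↥(U j)) (l : L) (t : UnbRadius),
        (u : S) = (u' : S) →
          Quot.mk (unbRel U g) ⟨i, (u, l, t)⟩ =
            Quot.mk (unbRel U g) ⟨j, (u', g i j (u : S) l, t)⟩) ∧
      -- (2) `L̂` is well defined, continuous, surjective and proper:
      (∀ (i : ι) (u : ↥(U i)) (l : L) (t : UnbRadius),
          hatL (Quot.mk (unbRel U g) ⟨i, (u, l, t)⟩) =
            a i (u : S) (conePt l ⟨|t.1|, abs_nonneg _, t.2⟩)) ∧
      Continuous hatL ∧ Function.Surjective hatL ∧ IsProperMap hatL ∧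
      -- (3) `ρ̂` is well defined and unbends the tubular radium:
      (∀ (i : ι) (u : ↥(U i)) (l : L) (t : UnbRadius),
          hatρ (Quot.mk (unbRel U g) ⟨i, (u, l, t)⟩) = t.1) ∧
      (∀ ρ : T → ℝ,
        (∀ i, ∀ u ∈ U i, ∀ (l : L) (r : ConeRadius),
          ρ (a i u (conePt l r)) = r.1) →
        ∀ x : UnbT U g, |hatρ x| = ρ (hatL x)) := by
  have hcover : ∀ y, ∃ i, y ∈ range (tubeChart U a i) :=
    fun y => (hUcover (τ y)).imp fun i hi => (hrange i).ge hi
  have hunbCharts i : IsOpenEmbedding (unbChart U g i) :=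
    isOpenEmbedding_unbChart ⟨hgid, hgcomp⟩ (hUopen i) fun j => hgcont j i
  have hpreimage i :
      unbendingMap a hcocycle ⁻¹' range (tubeChart U a i) = range (unbChart U g i) :=
    (congrArg _ (hrange i)).trans (preimage_unbendingMap_eq_range_unbChart a hcocycle hτa i)
  refine ⟨unbProj U g, unbendingMap a hcocycle, unbRadium U g, fun _ _ _ _ => rfl,
    continuous_unbProj, hunbCharts, range_unbChart,
    fun _ _ _ _ _ _ huu' => Quot.sound ⟨huu', rfl, rfl⟩, fun _ _ _ _ => rfl,
    continuous_unbendingMap a hcocycle fun i => (hcharts i).continuous,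
    surjective_unbendingMap a hcocycle hcover,
    isProperMap_unbendingMap a hcocycle hcharts hcover (fun i => (hunbCharts i).isEmbedding)
      hpreimage,
    fun _ _ _ _ => rfl, fun _ hρ => abs_unbRadium a hcocycle hρ⟩

/-- Let `τ : T → S` be a fiber bundle with fiber `c(L)` and radium-preserving
cocycles `g_{ij}`, and let `T̂ = (⨆ i, U i × L × ℝ)/∼` with `(u,l,t) ∼
(u, g_{ij}(u)(l), t)`.  Then (1) `[u,l,t] ↦ u` is a well-defined fiber bundle
`T̂ → S` with fiber `L × ℝ` and the same cocycles; (2) `L̂ : T̂ → T`,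
`[u,l,t] ↦ a i (u,[l,|t|])`, is well defined, continuous, surjective and proper;
(3) `ρ̂ : T̂ → ℝ`, `[u,l,t] ↦ t`, is well defined and satisfies
`|ρ̂(x)| = ρ(L̂(x))` for the tubular radium `ρ` of `T`. -/
theorem unbending_of_tube
    {S T L : Type*} [TopologicalSpace S] [TopologicalSpace T]
    [TopologicalSpace L] [CompactSpace L] [Nonempty L]
    (τ : T → S) (hτcont : Continuous τ)
    {ι : Type*} (U : ι → Set S)
    (hUopen : ∀ i, IsOpen (U i))
    (hUcover : ∀ u : S, ∃ i, u ∈ U i)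
    (a : ι → S → Cone L → T)
    (hτa : ∀ i, ∀ u ∈ U i, ∀ x : Cone L, τ (a i u x) = u)
    (hcharts : ∀ i, IsOpenEmbedding (fun p : ↥(U i) × Cone L => a i p.1.1 p.2))
    (hrange : ∀ i, Set.range (fun p : ↥(U i) × Cone L => a i p.1.1 p.2) = τ ⁻¹' (U i))
    (g : ι → ι → S → L ≃ₜ L)
    (hgcont : ∀ i j, Continuous fun p : S × L => g i j p.1 p.2)
    (hgid : ∀ i, ∀ u ∈ U i, g i i u = Homeomorph.refl L)
    (hgcomp : ∀ i j k, ∀ u ∈ U i ∩ U j ∩ U k, ∀ l : L,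
      g j k u (g i j u l) = g i k u l)
    (hcocycle : ∀ i j, ∀ u ∈ U i ∩ U j, ∀ (l : L) (r : ConeRadius),
      a i u (conePt l r) = a j u (conePt (g i j u l) r)) :
    ∃ (hatτ : UnbT U g → S) (hatL : UnbT U g → T) (hatρ : UnbT U g → ℝ),
      -- (1) the projection is well defined, continuous, and locally trivial with
      -- fiber `L × ℝ` and the same cocycles:
      (∀ (i : ι) (u : ↥(U i)) (l : L) (t : UnbRadius),
          hatτ (Quot.mk (unbRel U g) ⟨i, (u, l, t)⟩) = (u : S)) ∧
      Continuous hatτ ∧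
      (∀ i : ι, IsOpenEmbedding
        (fun p : ↥(U i) × L × UnbRadius => Quot.mk (unbRel U g) ⟨i, p⟩)) ∧
      (∀ i : ι, Set.range
        (fun p : ↥(U i) × L × UnbRadius => Quot.mk (unbRel U g) ⟨i, p⟩) =
          hatτ ⁻¹' (U i)) ∧
      (∀ (i j : ι) (u : ↥(U i)) (u' : ↥(U j)) (l : L) (t : UnbRadius),
        (u : S) = (u' : S) →
          Quot.mk (unbRel U g) ⟨i, (u, l, t)⟩ =
            Quot.mk (unbRel U g) ⟨j, (u', g i j (u : S) l, t)⟩) ∧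
      -- (2) `L̂` is well defined, continuous, surjective and proper:
      (∀ (i : ι) (u : ↥(U i)) (l : L) (t : UnbRadius),
          hatL (Quot.mk (unbRel U g) ⟨i, (u, l, t)⟩) =
            a i (u : S) (conePt l ⟨|t.1|, abs_nonneg _, t.2⟩)) ∧
      Continuous hatL ∧ Function.Surjective hatL ∧ IsProperMap hatL ∧
      -- (3) `ρ̂` is well defined and unbends the tubular radium:
      (∀ (i : ι) (u : ↥(U i)) (l : L) (t : UnbRadius),
          hatρ (Quot.mk (unbRel U g) ⟨i, (u, l, t)⟩) = t.1) ∧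
      (∀ ρ : T → ℝ,
        (∀ i, ∀ u ∈ U i, ∀ (l : L) (r : ConeRadius),
          ρ (a i u (conePt l r)) = r.1) →
        ∀ x : UnbT U g, |hatρ x| = ρ (hatL x)) :=
  unbending_of_tube_general τ U hUopen hUcover a hτa hcharts hrange g hgcont hgid hgcomp hcocycle
end
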